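/- arXiv:1812.02639 — 3 statements merged into one kernel-verified Lean document; each statement's English description precedes it below -/
import Mathlib

section
/- Let L be a lattice and F a nonempty finite set of elements of L. Define rep_F(t) as the infimum over f ∈ F of the joins t ⊔ f. Say an element f of L is beyond F when f' ≤ f for some f' ∈ F, and say t₁ ≡_F t₂ (t₁ and t₂ are indistinguishable as of F) when for every f beyond F, t₁ ≤ f if and only if t₂ ≤ f. Then for every t ∈ L, t ≡_F rep_F(t); that is, for every f with f' ≤ f for some f' ∈ F, one has t ≤ f if and only if rep_F(t) ≤ f. (Correctness of compaction.) -/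
theorem compaction_correctness {L : Type*} [Lattice L]
    (F : Finset L) (hF : F.Nonempty) (t : L) :
    ∀ f : L, (∃ f' ∈ F, f' ≤ f) →
      (t ≤ f ↔ F.inf' hF (fun f' => t ⊔ f') ≤ f) := by
  rintro f ⟨f', hf'F, hf'⟩
  constructor
  · intro ht
    exact le_trans (Finset.inf'_le _ hf'F) (sup_le ht hf')
  · intro h
    exact le_trans (Finset.le_inf' hF _ fun b _ => le_sup_left) h
end

section
/- Let L be a lattice and F a nonempty finite set of elements of L. Define rep_F(t) as the infimum over f ∈ F of the joins t ⊔ f, and say t₁ ≡_F t₂ when for every f ∈ L that is beyond F (i.e., f' ≤ f for some f' ∈ F), t₁ ≤ f if and only if t₂ ≤ f. Then for all t₁, t₂ ∈ L, if t₁ ≡_F t₂ then rep_F(t₁) = rep_F(t₂). (Optimality of compaction: indistinguishable elements receive the same representative.) -/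
theorem compaction_optimality {L : Type*} [Lattice L]
    (F : Finset L) (hF : F.Nonempty) (t₁ t₂ : L)
    (h : ∀ f : L, (∃ f' ∈ F, f' ≤ f) → (t₁ ≤ f ↔ t₂ ≤ f)) :
    F.inf' hF (fun f => t₁ ⊔ f) = F.inf' hF (fun f => t₂ ⊔ f) := by
  apply le_antisymm <;> apply Finset.le_inf' <;> intro f hf <;>
    refine le_trans (Finset.inf'_le _ hf) (sup_le ?_ le_sup_right)
  · exact (h (t₂ ⊔ f) ⟨f, hf, le_sup_right⟩).mpr le_sup_left |>.trans le_rfl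
  · exact (h (t₁ ⊔ f) ⟨f, hf, le_sup_right⟩).mp le_sup_left
end

section
/- Let L be a lattice and F a nonempty finite set of elements of L. Define rep_F(t) as the infimum over f ∈ F of the joins t ⊔ f, and say t₁ ≡_F t₂ when for every f ∈ L that is beyond F (i.e., f' ≤ f for some f' ∈ F), t₁ ≤ f if and only if t₂ ≤ f. Then for all t₁, t₂ ∈ L, if t₁ ≡_F t₂ then rep_F(t₂) ≤ t₁ ⊔ f for every f ∈ F, and consequently rep_F(t₂) ≤ rep_F(t₁). -/
theorem rep_le_of_indistinguishable {L : Type*} [Lattice L]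
    (F : Finset L) (hF : F.Nonempty) (t₁ t₂ : L)
    (h : ∀ f : L, (∃ f' ∈ F, f' ≤ f) → (t₁ ≤ f ↔ t₂ ≤ f)) :
    (∀ f ∈ F, F.inf' hF (fun f' => t₂ ⊔ f') ≤ t₁ ⊔ f) ∧
      F.inf' hF (fun f' => t₂ ⊔ f') ≤ F.inf' hF (fun f' => t₁ ⊔ f') := by
  have key : ∀ f ∈ F, F.inf' hF (fun f' => t₂ ⊔ f') ≤ t₁ ⊔ f := by
    intro f hf
    have h2 : t₂ ≤ t₁ ⊔ f := (h (t₁ ⊔ f) ⟨f, hf, le_sup_right⟩).mp le_sup_left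
    calc F.inf' hF (fun f' => t₂ ⊔ f') ≤ t₂ ⊔ f := Finset.inf'_le _ hf
      _ ≤ t₁ ⊔ f := sup_le h2 le_sup_right
  exact ⟨key, Finset.le_inf' _ _ key⟩
end
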